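/- Let $R$ be an irreducible simply-laced root system with highest root $\alpha_0$. Let $\gamma \in R^+$ and let $v$ be an element of the Weyl group of minimal length such that $v(\gamma) = \alpha_0$. Then for every positive root $\mu$ with $v(\mu) \in R^-$, one has $\langle \mu, \gamma^\vee \rangle = -1$. -/

import Mathlib

open scoped RealInnerProductSpace

noncomputable section

variable {V : Type} [NormedAddCommGroup V] [InnerProductSpace ℝ V]

/-- The reflection of `V` in the hyperplane orthogonal to `α`
(the identity map when `α = 0`). -/
def reflVec (α : V) : V ≃ₗ[ℝ] V where
  toFun x := x - (2 * ⟪x, α⟫ / ⟪α, α⟫) • α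
  invFun x := x - (2 * ⟪x, α⟫ / ⟪α, α⟫) • α
  map_add' x y := by
    try dsimp only
    have h : 2 * ⟪x + y, α⟫ / ⟪α, α⟫ = 2 * ⟪x, α⟫ / ⟪α, α⟫ + 2 * ⟪y, α⟫ / ⟪α, α⟫ := by
      rw [inner_add_left]; ring
    rw [h, add_smul]; abel
  map_smul' r x := by
    try dsimp only
    have h : 2 * ⟪r • x, α⟫ / ⟪α, α⟫ = r * (2 * ⟪x, α⟫ / ⟪α, α⟫) := by
      rw [real_inner_smul_left]; ring
    simp only [RingHom.id_apply]
    rw [h, mul_smul, smul_sub]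
  left_inv x := by
    dsimp only
    by_cases h : (⟪α, α⟫ : ℝ) = 0
    · simp [inner_self_eq_zero.mp h]
    · have h2 : 2 * ⟪x - (2 * ⟪x, α⟫ / ⟪α, α⟫) • α, α⟫ / ⟪α, α⟫
          = -(2 * ⟪x, α⟫ / ⟪α, α⟫) := by
        rw [inner_sub_left, real_inner_smul_left]
        field_simp
        ring
      rw [h2, neg_smul, sub_neg_eq_add, sub_add_cancel]
  right_inv x := by
    dsimp only
    by_cases h : (⟪α, α⟫ : ℝ) = 0
    · simp [inner_self_eq_zero.mp h]
    · have h2 : 2 * ⟪x - (2 * ⟪x, α⟫ / ⟪α, α⟫) • α, α⟫ / ⟪α, α⟫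
          = -(2 * ⟪x, α⟫ / ⟪α, α⟫) := by
        rw [inner_sub_left, real_inner_smul_left]
        field_simp
        ring
      rw [h2, neg_smul, sub_neg_eq_add, sub_add_cancel]

/-- The pairing `⟨x, y^∨⟩ = 2(x,y)/(y,y)` of a vector with the coroot of `y`. -/
def cpair (x y : V) : ℝ := 2 * ⟪x, y⟫ / ⟪y, y⟫

/-- A (reduced, crystallographic) root system in a real inner product space,
together with a chosen system of simple roots. -/
structure RootSystemData (V : Type) [NormedAddCommGroup V] [InnerProductSpace ℝ V] where
  roots : Finset V
  simples : Finset V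
  simples_subset : simples ⊆ roots
  root_ne_zero : ∀ α ∈ roots, α ≠ 0
  pairing_int : ∀ α ∈ roots, ∀ β ∈ roots, ∃ n : ℤ, (n : ℝ) = cpair α β
  reflect_mem : ∀ α ∈ roots, ∀ β ∈ roots, reflVec α β ∈ roots
  reduced : ∀ α ∈ roots, ∀ t : ℝ, t • α ∈ roots → t = 1 ∨ t = -1
  simples_indep : LinearIndependent ℝ (fun a : {x // x ∈ simples} => (a : V))
  root_pos_or_neg : ∀ β ∈ roots,
    (∃ c : V → ℕ, β = ∑ α ∈ simples, (c α : ℝ) • α) ∨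
    (∃ c : V → ℕ, -β = ∑ α ∈ simples, (c α : ℝ) • α)

namespace RootSystemData

/-- `v` is a non-negative integer combination of the elements of `I`. -/
def IsPosCombOf (P : RootSystemData V) (I : Finset V) (v : V) : Prop :=
  ∃ c : V → ℕ, v = ∑ α ∈ I, (c α : ℝ) • α

/-- `v` is a non-negative integer combination of the simple roots. -/
def IsPosComb (P : RootSystemData V) (v : V) : Prop := P.IsPosCombOf P.simples v

/-- The set of positive roots. -/
def Pos (P : RootSystemData V) : Set V := {β | β ∈ P.roots ∧ P.IsPosComb β}

/-- The set of negative roots. -/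
def Neg (P : RootSystemData V) : Set V := {β | -β ∈ P.Pos}

/-- The positive roots lying in the root subsystem generated by `I`. -/
def PosOf (P : RootSystemData V) (I : Finset V) : Set V := {β | β ∈ P.roots ∧ P.IsPosCombOf I β}

/-- The half sum of the positive roots. -/
def rho (P : RootSystemData V) : V := (2 : ℝ)⁻¹ • ∑ᶠ β ∈ P.Pos, β

/-- The half sum of the positive roots in the root subsystem generated by `I`. -/
def rhoOf (P : RootSystemData V) (I : Finset V) : V := (2 : ℝ)⁻¹ • ∑ᶠ β ∈ P.PosOf I, β

/-- The parabolic subgroup of the Weyl group generated by the reflections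
in the elements of `I`. -/
def WeylOf (P : RootSystemData V) (I : Finset V) : Subgroup (V ≃ₗ[ℝ] V) :=
  Subgroup.closure (reflVec '' (I : Set V))

/-- The Weyl group, generated by the simple reflections. -/
def Weyl (P : RootSystemData V) : Subgroup (V ≃ₗ[ℝ] V) := P.WeylOf P.simples

/-- `l` is a word with letters in `I` whose associated product of reflections is `w`. -/
def IsWordOf (P : RootSystemData V) (I : Finset V) (l : List V) (w : V ≃ₗ[ℝ] V) : Prop :=
  (∀ α ∈ l, α ∈ I) ∧ (l.map reflVec).prod = w

/-- The length of `w` with respect to the reflections in the elements of `I`. -/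
def lengthOf (P : RootSystemData V) (I : Finset V) (w : V ≃ₗ[ℝ] V) : ℕ :=
  sInf {n | ∃ l, P.IsWordOf I l w ∧ l.length = n}

/-- The Coxeter length of `w` with respect to the simple reflections. -/
def length (P : RootSystemData V) (w : V ≃ₗ[ℝ] V) : ℕ := P.lengthOf P.simples w

/-- `l` is a reduced decomposition of `w` into simple reflections. -/
def IsReducedWord (P : RootSystemData V) (l : List V) (w : V ≃ₗ[ℝ] V) : Prop :=
  P.IsWordOf P.simples l w ∧ l.length = P.length w

/-- The partial order on the root lattice: `x ≤ y` iff `y - x` is a non-negative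
integer combination of simple roots. -/
def rootLE (P : RootSystemData V) (x y : V) : Prop := P.IsPosComb (y - x)

/-- The root system is simply laced: all roots have the same length. -/
def SimplyLaced (P : RootSystemData V) : Prop := ∀ α ∈ P.roots, ∀ β ∈ P.roots, ⟪α, α⟫ = ⟪β, β⟫

/-- The root system is irreducible: it admits no decomposition into two
non-empty mutually orthogonal parts. -/
def Irred (P : RootSystemData V) : Prop :=
  ∀ A B : Set V, (P.roots : Set V) ⊆ A ∪ B →
    (∀ a ∈ A ∩ (P.roots : Set V), ∀ b ∈ B ∩ (P.roots : Set V), ⟪a, b⟫ = 0) →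
    A ∩ (P.roots : Set V) = ∅ ∨ B ∩ (P.roots : Set V) = ∅

/-- `ϖ` is the fundamental weight associated with the simple root `α`. -/
def IsFundamentalWeight (P : RootSystemData V) (α ϖ : V) : Prop :=
  cpair ϖ α = 1 ∧ ∀ γ ∈ P.simples, γ ≠ α → cpair ϖ γ = 0

/-- The weight `ϖ` is minuscule: it pairs with every positive coroot by at most `1`. -/
def IsMinusculeWeight (P : RootSystemData V) (ϖ : V) : Prop := ∀ β ∈ P.Pos, cpair ϖ β ≤ 1

/-- The support of `w`: the set of simple roots whose reflections occur in a
reduced decomposition of `w`. -/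
def Supp (P : RootSystemData V) (w : V ≃ₗ[ℝ] V) : Set V :=
  {δ | δ ∈ P.simples ∧ ∃ l, P.IsReducedWord l w ∧ δ ∈ l}

end RootSystemData

/-! Since `v` is an isometry with `v γ = α₀`, `⟨μ, γ^∨⟩ = ⟨v μ, α₀^∨⟩`, and the highest root pairs
non-negatively with every positive root (otherwise `β + α₀` would be a root above `α₀`); as `v μ`
is negative, `⟨μ, γ^∨⟩ ≤ 0`. The value `0` is excluded by minimality: then `s_μ γ = γ`, and by the
exchange condition `v s_μ` is shorter than `v` while still sending `γ` to `α₀`. In a simply-laced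
system `⟨μ, γ^∨⟩ = -2` forces `μ = -γ`, which is impossible for two positive roots. -/

open Finset

lemma reflVec_apply_eq_sub_cpair_smul (α x : V) : reflVec α x = x - cpair x α • α := rfl

lemma reflVec_inv (α : V) : (reflVec α)⁻¹ = reflVec α := rfl

lemma reflVec_mul_self (α : V) : reflVec α * reflVec α = 1 := by
  nth_rewrite 1 [← reflVec_inv α]
  exact inv_mul_cancel _

lemma reflVec_self {α : V} (h : α ≠ 0) : reflVec α α = -α := by
  rw [reflVec_apply_eq_sub_cpair_smul, cpair, mul_div_assoc,
    div_self ((inner_self_ne_zero (𝕜 := ℝ)).mpr h)]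
  module

lemma cpair_eq_zero_iff {x y : V} (hy : y ≠ 0) : cpair x y = 0 ↔ ⟪x, y⟫ = 0 := by
  simp [cpair, hy]

lemma reflVec_eq_self_of_inner_eq_zero {α x : V} (h : ⟪x, α⟫ = 0) : reflVec α x = x := by
  rw [reflVec_apply_eq_sub_cpair_smul, cpair, h, mul_zero, zero_div, zero_smul, sub_zero]

lemma inner_reflVec_reflVec (α x y : V) : ⟪reflVec α x, reflVec α y⟫ = ⟪x, y⟫ := by
  rcases eq_or_ne α 0 with rfl | hα
  · simp [reflVec_apply_eq_sub_cpair_smul]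
  · have := (inner_self_ne_zero (𝕜 := ℝ)).mpr hα
    simp only [reflVec_apply_eq_sub_cpair_smul, cpair, inner_sub_left, inner_sub_right,
      real_inner_smul_left, real_inner_smul_right, real_inner_comm α y]
    field_simp
    ring

lemma cpair_neg_left (x y : V) : cpair (-x) y = -cpair x y := by
  rw [cpair, cpair, inner_neg_left]; ring

lemma cpair_map_map {w : V ≃ₗ[ℝ] V} (hw : ∀ x y, ⟪w x, w y⟫ = ⟪x, y⟫) (x y : V) :
    cpair (w x) (w y) = cpair x y := by
  rw [cpair, cpair, hw, hw]

lemma reflVec_conj {w : V ≃ₗ[ℝ] V} (hw : ∀ x y, ⟪w x, w y⟫ = ⟪x, y⟫) (μ : V) :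
    w * reflVec μ * w⁻¹ = reflVec (w μ) := by
  ext x
  obtain ⟨y, rfl⟩ := w.surjective x
  change w (reflVec μ (w.symm (w y))) = reflVec (w μ) (w y)
  rw [w.symm_apply_apply, reflVec_apply_eq_sub_cpair_smul, reflVec_apply_eq_sub_cpair_smul,
    cpair_map_map hw, map_sub, map_smul]

lemma inner_add_add_self_eq_mul_cpair {α β : V} (hlen : ⟪α, α⟫ = ⟪β, β⟫) (hβ : β ≠ 0) :
    ⟪α + β, α + β⟫ = (2 + cpair α β) * ⟪β, β⟫ := by
  have := (inner_self_ne_zero (𝕜 := ℝ)).mpr hβ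
  rw [inner_add_add_self, hlen, cpair, real_inner_comm β α]
  field_simp
  ring

namespace RootSystemData

variable (P : RootSystemData V)

lemma eq_of_sum_smul_simples_eq {r s : V → ℝ}
    (h : ∑ α ∈ P.simples, r α • α = ∑ α ∈ P.simples, s α • α) :
    ∀ α ∈ P.simples, r α = s α := by
  intro α hα
  have h' : ∑ i ∈ P.simples.attach, (r i - s i) • (i : V) = 0 := by
    rw [sum_attach P.simples fun x => (r x - s x) • x]
    simp only [sub_smul, sum_sub_distrib, h, sub_self]
  exact sub_eq_zero.mp <|
    linearIndependent_iff'.mp P.simples_indep _ (fun i => r i - s i) h' ⟨α, hα⟩ (mem_attach _ _)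

variable {P}

lemma neg_mem_roots {β : V} (hβ : β ∈ P.roots) : -β ∈ P.roots := by
  simpa only [reflVec_self (P.root_ne_zero β hβ)] using P.reflect_mem β hβ β hβ

lemma mem_Neg_iff {β : V} : β ∈ P.Neg ↔ β ∈ P.roots ∧ P.IsPosComb (-β) := by
  change -β ∈ P.roots ∧ _ ↔ _
  exact and_congr_left' ⟨fun h => neg_neg β ▸ neg_mem_roots h, neg_mem_roots⟩

lemma mem_Pos_or_mem_Neg {β : V} (hβ : β ∈ P.roots) : β ∈ P.Pos ∨ β ∈ P.Neg :=
  (P.root_pos_or_neg β hβ).imp (⟨hβ, ·⟩) (mem_Neg_iff.mpr ⟨hβ, ·⟩)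

lemma notMem_Neg_of_mem_Pos {β : V} (hβ : β ∈ P.Pos) : β ∉ P.Neg := by
  rintro hβ'
  obtain ⟨hr, c, hc⟩ := hβ
  obtain ⟨-, d, hd⟩ := mem_Neg_iff.mp hβ'
  have hcd := P.eq_of_sum_smul_simples_eq (r := fun α => (c α : ℝ) + d α) (s := fun _ => 0) <| by
    simp only [add_smul, sum_add_distrib, ← hc, ← hd, add_neg_cancel, zero_smul,
      sum_const_zero]
  refine P.root_ne_zero β hr (hc ▸ sum_eq_zero fun α hα => ?_)
  have hcα : (c α : ℝ) = 0 := by linarith [hcd α hα, (d α).cast_nonneg (α := ℝ)]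
  rw [hcα, zero_smul]

lemma ne_neg_of_mem_Pos {α β : V} (hα : α ∈ P.Pos) (hβ : β ∈ P.Pos) : α ≠ -β := by
  rintro rfl
  exact notMem_Neg_of_mem_Pos hα (show - -β ∈ P.Pos by rwa [neg_neg])

/-- A simple reflection `s_α` permutes the positive roots other than `α`. -/
lemma eq_of_reflVec_simple_mem_Neg {α β : V} (hα : α ∈ P.simples) (hβ : β ∈ P.Pos)
    (hneg : reflVec α β ∈ P.Neg) : β = α := by
  classical
  obtain ⟨hβr, c, hc⟩ := hβ
  obtain ⟨-, d, hd⟩ := mem_Neg_iff.mp hneg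
  rw [reflVec_apply_eq_sub_cpair_smul, neg_sub] at hd
  have hcd := P.eq_of_sum_smul_simples_eq
    (r := fun x => (c x : ℝ) + d x) (s := fun x => if x = α then cpair β α else 0) <| by
    simp only [add_smul, sum_add_distrib, ← hc, ← hd, ite_smul, zero_smul,
      sum_ite_eq' P.simples α, if_pos hα]
    abel
  have hc0 : ∀ x ∈ P.simples, x ≠ α → c x • x = (0 : V) := fun x hx hxα => by
    have := hcd x hx
    rw [if_neg hxα] at this
    have hcx : (c x : ℝ) = 0 := by linarith [(d x).cast_nonneg (α := ℝ)]
    rw [← Nat.cast_smul_eq_nsmul ℝ, hcx, zero_smul]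
  have hβα : β = (c α : ℝ) • α := by
    rw [hc, sum_eq_single_of_mem α hα fun x hx hxα => by rw [Nat.cast_smul_eq_nsmul, hc0 x hx hxα]]
  rcases P.reduced α (P.simples_subset hα) (c α) (hβα ▸ hβr) with h1 | h1
  · rw [hβα, h1, one_smul]
  · linarith [(c α).cast_nonneg (α := ℝ)]

lemma cpair_eq_neg_one_of_neg (hSL : P.SimplyLaced) {α β : V} (hα : α ∈ P.roots)
    (hβ : β ∈ P.roots) (hne : α ≠ -β) (hlt : cpair α β < 0) : cpair α β = -1 := by
  obtain ⟨n, hn⟩ := P.pairing_int α hα β hβ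
  have hpos : 0 < (2 + cpair α β) * ⟪β, β⟫ := by
    rw [← inner_add_add_self_eq_mul_cpair (hSL α hα β hβ) (P.root_ne_zero β hβ)]
    exact real_inner_self_pos.mpr fun h => hne (eq_neg_of_add_eq_zero_left h)
  have hlow : -2 < cpair α β := by
    linarith [pos_of_mul_pos_left hpos real_inner_self_nonneg]
  rw [← hn] at hlow hlt ⊢
  obtain rfl : n = -1 := by
    have : -2 < n := by exact_mod_cast hlow
    have : n < 0 := by exact_mod_cast hlt
    omega
  norm_num

lemma cpair_nonneg_of_highest (hSL : P.SimplyLaced) {α₀ : V} (h₀ : α₀ ∈ P.Pos)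
    (hhighest : ∀ β ∈ P.roots, P.rootLE β α₀) {β : V} (hβ : β ∈ P.Pos) :
    0 ≤ cpair β α₀ := by
  by_contra! hlt
  have h1 := cpair_eq_neg_one_of_neg hSL hβ.1 h₀.1 (ne_neg_of_mem_Pos hβ h₀) hlt
  have hsum : reflVec α₀ β = β + α₀ := by
    rw [reflVec_apply_eq_sub_cpair_smul, h1, neg_one_smul, sub_neg_eq_add]
  have hle := hhighest _ (hsum ▸ P.reflect_mem α₀ h₀.1 β hβ.1)
  rw [rootLE, sub_add_cancel_right] at hle
  exact notMem_Neg_of_mem_Pos hβ (mem_Neg_iff.mpr ⟨hβ.1, hle⟩)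

section Words

variable {I : Finset V}

lemma exists_isWordOf {w : V ≃ₗ[ℝ] V} (hw : w ∈ P.WeylOf I) : ∃ l, P.IsWordOf I l w := by
  induction hw using Subgroup.closure_induction'' with
  | one => exact ⟨[], by simp, rfl⟩
  | mem x hx =>
    obtain ⟨α, hα, rfl⟩ := hx
    exact ⟨[α], by simpa using hα, by simp⟩
  | inv_mem x hx =>
    obtain ⟨α, hα, rfl⟩ := hx
    exact ⟨[α], by simpa using hα, by simp [reflVec_inv]⟩
  | mul x y _ _ ihx ihy =>
    obtain ⟨l₁, hl₁, rfl⟩ := ihx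
    obtain ⟨l₂, hl₂, rfl⟩ := ihy
    exact ⟨l₁ ++ l₂, fun α hα => (List.mem_append.mp hα).elim (hl₁ α) (hl₂ α), by simp⟩

lemma IsWordOf.mem_WeylOf {l : List V} {w : V ≃ₗ[ℝ] V} (hl : P.IsWordOf I l w) :
    w ∈ P.WeylOf I := by
  rw [← hl.2]
  refine list_prod_mem fun x hx => ?_
  obtain ⟨α, hα, rfl⟩ := List.mem_map.mp hx
  exact Subgroup.subset_closure ⟨α, hl.1 α hα, rfl⟩

lemma lengthOf_le_length {l : List V} {w : V ≃ₗ[ℝ] V} (hl : P.IsWordOf I l w) :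
    P.lengthOf I w ≤ l.length :=
  Nat.sInf_le ⟨l, hl, rfl⟩

lemma exists_isWordOf_length_eq {w : V ≃ₗ[ℝ] V} (hw : w ∈ P.WeylOf I) :
    ∃ l, P.IsWordOf I l w ∧ l.length = P.lengthOf I w := by
  obtain ⟨l, hl⟩ := exists_isWordOf hw
  exact Nat.sInf_mem (s := {n | ∃ l, P.IsWordOf I l w ∧ l.length = n}) ⟨l.length, l, hl, rfl⟩

lemma inner_map_map_of_mem_WeylOf {w : V ≃ₗ[ℝ] V} (hw : w ∈ P.WeylOf I) (x y : V) :
    ⟪w x, w y⟫ = ⟪x, y⟫ := by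
  obtain ⟨l, -, rfl⟩ := exists_isWordOf hw
  clear hw
  induction l generalizing x y with
  | nil => rfl
  | cons α t ih =>
    simp only [List.map_cons, List.prod_cons, LinearEquiv.mul_apply]
    rw [inner_reflVec_reflVec, ih]

lemma prod_map_reflVec_mem_roots {l : List V} (hl : ∀ α ∈ l, α ∈ P.roots) {β : V}
    (hβ : β ∈ P.roots) : (l.map reflVec).prod β ∈ P.roots := by
  induction l with
  | nil => exact hβ
  | cons α t ih =>
    exact P.reflect_mem α (hl α List.mem_cons_self) _
      (ih fun x hx => hl x (List.mem_cons_of_mem α hx))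

end Words

/-- The exchange condition, for arbitrary (not necessarily reduced) words. -/
lemma IsWordOf.exchange {l : List V} {w : V ≃ₗ[ℝ] V} (hl : P.IsWordOf P.simples l w)
    {μ : V} (hμ : μ ∈ P.Pos) (hneg : w μ ∈ P.Neg) :
    ∃ l', P.IsWordOf P.simples l' (w * reflVec μ) ∧ l'.length + 1 = l.length := by
  obtain ⟨hls, rfl⟩ := hl
  induction l with
  | nil => exact absurd hneg (notMem_Neg_of_mem_Pos hμ)
  | cons s t ih =>
    have hts : ∀ α ∈ t, α ∈ P.simples := fun α hα => hls α (List.mem_cons_of_mem s hα)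
    have hs : s ∈ P.simples := hls s List.mem_cons_self
    set T := (t.map reflVec).prod
    have hTμ : T μ ∈ P.roots :=
      prod_map_reflVec_mem_roots (fun α hα => P.simples_subset (hts α hα)) hμ.1
    change reflVec s (T μ) ∈ P.Neg at hneg
    rcases mem_Pos_or_mem_Neg hTμ with hpos | hTneg
    · -- `T μ = s`, so `s T = T s_μ` and the letter `s` can be dropped
      have hT : P.IsWordOf P.simples t T := ⟨hts, rfl⟩
      have hconj := reflVec_conj (inner_map_map_of_mem_WeylOf hT.mem_WeylOf) μ
      rw [eq_of_reflVec_simple_mem_Neg hs hpos hneg] at hconj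
      refine ⟨t, ⟨hts, ?_⟩, rfl⟩
      show T = reflVec s * T * reflVec μ
      rw [← hconj, inv_mul_cancel_right, mul_assoc, reflVec_mul_self, mul_one]
    · obtain ⟨l', ⟨hl's, hl'⟩, hlen⟩ := ih hts hTneg
      refine ⟨s :: l', ⟨?_, ?_⟩, by simp [hlen]⟩
      · exact fun α hα => (List.mem_cons.mp hα).elim (· ▸ hs) (hl's α)
      · rw [List.map_cons, List.prod_cons, hl', ← mul_assoc]
        rfl

lemma exists_isWordOf_mul_reflVec_length_lt {v : V ≃ₗ[ℝ] V} (hv : v ∈ P.Weyl) {μ : V}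
    (hμ : μ ∈ P.Pos) (hneg : v μ ∈ P.Neg) :
    ∃ l, P.IsWordOf P.simples l (v * reflVec μ) ∧ l.length < P.length v := by
  obtain ⟨l, hl, hlen⟩ := exists_isWordOf_length_eq hv
  obtain ⟨l', hl', hlen'⟩ := hl.exchange hμ hneg
  exact ⟨l', hl', by rw [length, ← hlen]; omega⟩

end RootSystemData

open RootSystemData in
theorem cpair_eq_neg_one_of_minimal_general (P : RootSystemData V)
    (hSL : P.SimplyLaced)
    (α₀ : V) (h₀ : α₀ ∈ P.Pos) (hhighest : ∀ β ∈ P.roots, P.rootLE β α₀)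
    (γ : V) (hγ : γ ∈ P.Pos)
    (v : V ≃ₗ[ℝ] V) (hv : v ∈ P.Weyl) (hvγ : v γ = α₀)
    (hmin : ∀ u ∈ P.Weyl, u γ = α₀ → P.length v ≤ P.length u)
    (μ : V) (hμ : μ ∈ P.Pos) (hneg : v μ ∈ P.Neg) :
    cpair μ γ = -1 := by
  have hle : cpair μ γ ≤ 0 := by
    rw [← cpair_map_map (inner_map_map_of_mem_WeylOf hv), hvγ, ← neg_nonneg, ← cpair_neg_left]
    exact cpair_nonneg_of_highest hSL h₀ hhighest hneg
  have hne : cpair μ γ ≠ 0 := fun h => by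
    obtain ⟨l, hl, hlen⟩ := exists_isWordOf_mul_reflVec_length_lt hv hμ hneg
    have hγ_fixed : (v * reflVec μ) γ = α₀ := by
      rw [LinearEquiv.mul_apply, reflVec_eq_self_of_inner_eq_zero, hvγ]
      rwa [real_inner_comm, ← cpair_eq_zero_iff (P.root_ne_zero γ hγ.1)]
    exact (hmin _ hl.mem_WeylOf hγ_fixed).not_gt ((lengthOf_le_length hl).trans_lt hlen)
  exact cpair_eq_neg_one_of_neg hSL hμ.1 hγ.1 (ne_neg_of_mem_Pos hμ hγ) (hle.lt_of_ne hne)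

/-- In an irreducible simply-laced root system with highest root `α₀`,
if `v` is of minimal length with `v(γ) = α₀` (`γ` a positive root), then every positive
root `μ` with `v(μ) ∈ R⁻` satisfies `⟨μ, γ^∨⟩ = -1`. -/
theorem cpair_eq_neg_one_of_minimal (P : RootSystemData V)
    (hSL : P.SimplyLaced) (hirr : P.Irred)
    (α₀ : V) (h₀ : α₀ ∈ P.Pos) (hhighest : ∀ β ∈ P.roots, P.rootLE β α₀)
    (γ : V) (hγ : γ ∈ P.Pos)
    (v : V ≃ₗ[ℝ] V) (hv : v ∈ P.Weyl) (hvγ : v γ = α₀)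
    (hmin : ∀ u ∈ P.Weyl, u γ = α₀ → P.length v ≤ P.length u)
    (μ : V) (hμ : μ ∈ P.Pos) (hneg : v μ ∈ P.Neg) :
    cpair μ γ = -1 :=
  cpair_eq_neg_one_of_minimal_general P hSL α₀ h₀ hhighest γ hγ v hv hvγ hmin μ hμ hneg
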